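/- Let r : (ZMod 9)ˣ → ZMod 3 be any surjective group homomorphism (to the additive group ZMod 3). Let F := {(h, α) ∈ G_n × (ZMod 9)ˣ : π₀(q_n(h)) = r(α)}, a subgroup of G_n × (ZMod 9)ˣ acting on the set T_n := {g ∈ G_n : g ≠ 1 and π₀(q_n(g)) = 0} by (h, α) · g = h * g^(α.val) * h⁻¹ (well-defined since g^9 = 1 for all g ∈ G_n). Then the number of orbits of F on T_n equals (9^n − 1)/3 + (27^n − 1)/6. -/
import Mathlib


/-- The abelian group `A_n = ℤ/3 ⊕ (ℤ/9)^n`. -/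
abbrev An (n : ℕ) : Type := ZMod 3 × (Fin n → ZMod 9)

/-- Projection onto the `ℤ/3` factor. -/
def pi0 {n : ℕ} (a : An n) : ZMod 3 := a.1

/-- The reduction map `ℤ/9 → ℤ/3`. -/
def red : ZMod 9 →+* ZMod 3 := ZMod.castHom (show 3 ∣ 9 by norm_num) (ZMod 3)

/-- The `i`-th `ℤ/9` coordinate reduced mod 3. -/
def pii {n : ℕ} (i : Fin n) (a : An n) : ZMod 3 := red (a.2 i)

/-- The 2-cocycle `θ(σ,τ) i = π₀(σ)·π_i(τ)`. -/
def theta {n : ℕ} (σ τ : An n) : Fin n → ZMod 3 := fun i => pi0 σ * pii i τ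

/-- The underlying set of the group `G_n`. -/
def Gn (n : ℕ) : Type := (Fin n → ZMod 3) × An n

namespace Gn

variable {n : ℕ}

instance instFintype : Fintype (Gn n) :=
  inferInstanceAs (Fintype ((Fin n → ZMod 3) × An n))

instance instDecEq : DecidableEq (Gn n) :=
  inferInstanceAs (DecidableEq ((Fin n → ZMod 3) × An n))

lemma theta_add_left (a b c : An n) : theta (a + b) c = theta a c + theta b c := by
  funext i; simp only [theta, pi0, Pi.add_apply, Prod.fst_add]; ring

lemma theta_add_right (a b c : An n) : theta a (b + c) = theta a b + theta a c := by
  funext i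
  simp only [theta, pii, pi0, Pi.add_apply, Prod.snd_add, map_add]
  ring

lemma theta_zero_left (a : An n) : theta 0 a = 0 := by
  funext i; simp [theta, pi0]

lemma theta_zero_right (a : An n) : theta a 0 = 0 := by
  funext i; simp [theta, pii]

lemma theta_neg_left (a b : An n) : theta (-a) b = - theta a b := by
  funext i; simp only [theta, pi0, Prod.fst_neg, Pi.neg_apply]; ring

/-- The group structure on `G_n` given by the cocycle `θ`. -/
instance instGroup : Group (Gn n) where
  mul x y := (x.1 + y.1 + theta x.2 y.2, x.2 + y.2)
  one := (0, 0)
  inv x := (-x.1 + theta x.2 x.2, -x.2)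
  mul_assoc x y z := by
    apply Prod.ext
    · show x.1 + y.1 + theta x.2 y.2 + z.1 + theta (x.2 + y.2) z.2
        = x.1 + (y.1 + z.1 + theta y.2 z.2) + theta x.2 (y.2 + z.2)
      rw [theta_add_left, theta_add_right]; abel
    · exact add_assoc _ _ _
  one_mul x := by
    apply Prod.ext
    · show 0 + x.1 + theta 0 x.2 = x.1
      rw [theta_zero_left]; abel
    · exact zero_add _
  mul_one x := by
    apply Prod.ext
    · show x.1 + 0 + theta x.2 0 = x.1
      rw [theta_zero_right]; abel
    · exact add_zero _
  inv_mul_cancel x := by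
    apply Prod.ext
    · show -x.1 + theta x.2 x.2 + x.1 + theta (-x.2) x.2 = 0
      rw [theta_neg_left]; abel
    · exact neg_add_cancel _

/-- The quotient map `q_n : G_n → A_n`, `(c, a) ↦ a`. -/
def qn (x : Gn n) : An n := x.2

lemma qn_mul (x y : Gn n) : qn (x * y) = qn x + qn y := rfl

/-- `q_n` as a group homomorphism to (the multiplicative version of) `A_n`. -/
def qnHom : Gn n →* Multiplicative (An n) where
  toFun x := Multiplicative.ofAdd (qn x)
  map_one' := rfl
  map_mul' _ _ := rfl

end Gn

section Aux
open Multiplicative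
variable {n : ℕ}

lemma Gn.mul_def (x y : Gn n) : x * y = (x.1 + y.1 + theta x.2 y.2, x.2 + y.2) := rfl
lemma Gn.inv_def (x : Gn n) : x⁻¹ = (-x.1 + theta x.2 x.2, -x.2) := rfl
lemma Gn.one_def : (1 : Gn n) = ((0 : Fin n → ZMod 3), (0 : An n)) := rfl

/-- elements of `G_n` with vanishing `π₀`. -/
def pureG (c : Fin n → ZMod 3) (v : Fin n → ZMod 9) : Gn n := (c, ((0 : ZMod 3), v))

lemma pureG_inj {c c' : Fin n → ZMod 3} {v v' : Fin n → ZMod 9} :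
    pureG c v = pureG c' v' ↔ c = c' ∧ v = v' := by
  constructor
  · intro h
    exact ⟨congrArg Prod.fst h, congrArg (fun x => x.2.2) h⟩
  · rintro ⟨rfl, rfl⟩; rfl

lemma pureG_eq_one {c : Fin n → ZMod 3} {v : Fin n → ZMod 9} :
    pureG c v = 1 ↔ c = 0 ∧ v = 0 := by
  rw [Gn.one_def, show ((0 : Fin n → ZMod 3), (0 : An n)) = pureG 0 0 from rfl, pureG_inj]

lemma eq_pureG {g : Gn n} (h : pi0 (Gn.qn g) = 0) : g = pureG g.1 g.2.2 := by
  have h2 : g.2 = ((0 : ZMod 3), g.2.2) := Prod.ext h rfl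
  show g = (g.1, ((0 : ZMod 3), g.2.2))
  rw [← h2]
  rfl

lemma theta_pureG_left (c : Fin n → ZMod 3) (v : Fin n → ZMod 9) (a : An n) :
    theta (pureG c v).2 a = 0 := by
  funext i; simp only [pureG, theta, pi0, Pi.zero_apply, zero_mul]

lemma pureG_mul (c c' : Fin n → ZMod 3) (v v' : Fin n → ZMod 9) :
    pureG c v * pureG c' v' = pureG (c + c') (v + v') := by
  rw [Gn.mul_def, theta_pureG_left]
  apply Prod.ext
  · show c + c' + 0 = c + c'
    rw [add_zero]
  · apply Prod.ext
    · show (0 : ZMod 3) + 0 = 0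
      rw [add_zero]
    · rfl

lemma pureG_pow (c : Fin n → ZMod 3) (v : Fin n → ZMod 9) (m : ℕ) :
    (pureG c v) ^ m = pureG (m • c) (m • v) := by
  induction m with
  | zero => rw [pow_zero, zero_nsmul, zero_nsmul]; rfl
  | succ k ih =>
      rw [pow_succ, ih, pureG_mul, succ_nsmul, succ_nsmul]

lemma pureG_pow_nine (c : Fin n → ZMod 3) (v : Fin n → ZMod 9) : (pureG c v) ^ 9 = 1 := by
  rw [pureG_pow, pureG_eq_one]
  have h3 : ∀ x : ZMod 3, (9 : ℕ) • x = 0 := by decide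
  have h9 : ∀ x : ZMod 9, (9 : ℕ) • x = 0 := by decide
  exact ⟨funext fun i => h3 (c i), funext fun i => h9 (v i)⟩

lemma conj_pureG (x : Gn n) (c : Fin n → ZMod 3) (v : Fin n → ZMod 9) :
    x * pureG c v * x⁻¹ = pureG (c + fun i => pi0 (Gn.qn x) * red (v i)) v := by
  rw [Gn.mul_def, Gn.inv_def, Gn.mul_def]
  apply Prod.ext
  · show x.1 + (pureG c v).1 + theta x.2 (pureG c v).2 + (-x.1 + theta x.2 x.2)
        + theta (x.2 + (pureG c v).2) (-x.2) = _
    funext i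
    simp only [pureG, theta, pii, pi0, Gn.qn, Pi.add_apply, Prod.fst_add, Prod.snd_add,
      Prod.fst_neg, Prod.snd_neg, Pi.neg_apply, map_neg, Pi.add_apply, map_zero]
    ring
  · show x.2 + (pureG c v).2 + -x.2 = (pureG c v).2
    abel


variable (r : (ZMod 9)ˣ →* Multiplicative (ZMod 3))

/-- a chosen lift of `r α` to `G_n`. -/
def xa (α : (ZMod 9)ˣ) : Gn n :=
  ((0 : Fin n → ZMod 3), ((Multiplicative.toAdd (r α) : ZMod 3), (0 : Fin n → ZMod 9)))

lemma pi0_qn_xa (α : (ZMod 9)ˣ) : pi0 (Gn.qn (xa (n := n) r α)) = Multiplicative.toAdd (r α) := rfl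

lemma xa_mul (α β : (ZMod 9)ˣ) : xa (n := n) r (α * β) = xa r α * xa r β := by
  rw [Gn.mul_def]
  apply Prod.ext
  · show (0 : Fin n → ZMod 3) = 0 + 0 + theta _ _
    funext i
    simp only [theta, pii, pi0, xa, Pi.add_apply, Pi.zero_apply, map_zero, mul_zero, add_zero]
  · apply Prod.ext
    · show (Multiplicative.toAdd (r (α * β)) : ZMod 3) = _ + _
      rw [map_mul]; rfl
    · show (0 : Fin n → ZMod 9) = 0 + 0
      rw [add_zero]

lemma xa_one : xa (n := n) r 1 = 1 := by
  simp only [xa, map_one, toAdd_one, Gn.one_def]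
  rfl

/-- The action of `(ZMod 9)ˣ` on `G_n`. -/
def act (α : (ZMod 9)ˣ) (g : Gn n) : Gn n := xa r α * g ^ (α : ZMod 9).val * (xa r α)⁻¹

lemma act_pureG (α : (ZMod 9)ˣ) (c : Fin n → ZMod 3) (v : Fin n → ZMod 9) :
    act r α (pureG c v) =
      pureG ((α : ZMod 9).val • c + fun i => Multiplicative.toAdd (r α) * red (((α : ZMod 9).val • v) i))
        ((α : ZMod 9).val • v) := by
  rw [act, pureG_pow, conj_pureG, pi0_qn_xa]

lemma act_one (g : Gn n) : act r 1 g = g := by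
  rw [act, xa_one]
  have : ((1 : (ZMod 9)ˣ) : ZMod 9).val = 1 := rfl
  rw [this, pow_one]
  group

lemma act_mul (α β : (ZMod 9)ˣ) (c : Fin n → ZMod 3) (v : Fin n → ZMod 9) :
    act r α (act r β (pureG c v)) = act r (α * β) (pureG c v) := by
  have hconj : ∀ (x h : Gn n) (m : ℕ), (x * h * x⁻¹) ^ m = x * h ^ m * x⁻¹ := by
    intro x h m
    have := map_pow (MulAut.conj x) h m
    simpa [MulAut.conj_apply] using this.symm
  rw [act, act, act, hconj, xa_mul]
  have h9 : (pureG c v) ^ (9 : ℕ) = 1 := pureG_pow_nine c v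
  have hpow : ((pureG c v) ^ ((β : ZMod 9)).val) ^ ((α : ZMod 9)).val
      = (pureG c v) ^ (((α * β : (ZMod 9)ˣ) : ZMod 9)).val := by
    rw [← pow_mul, pow_eq_pow_mod _ h9]
    have : ((α * β : (ZMod 9)ˣ) : ZMod 9) = (α : ZMod 9) * (β : ZMod 9) := rfl
    rw [this, ZMod.val_mul]
    rw [Nat.mul_comm]
  rw [hpow, mul_inv_rev]
  group

lemma act_one_elem (α : (ZMod 9)ˣ) : act r α (1 : Gn n) = 1 := by
  rw [act, one_pow, mul_one, mul_inv_cancel]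

lemma pi0_qn_act (α : (ZMod 9)ˣ) {g : Gn n} (hg : pi0 (Gn.qn g) = 0) :
    pi0 (Gn.qn (act r α g)) = 0 := by
  rw [eq_pureG hg, act_pureG]; rfl

lemma act_cancel (α : (ZMod 9)ˣ) {g : Gn n} (hg : pi0 (Gn.qn g) = 0) :
    act r α⁻¹ (act r α g) = g := by
  conv_lhs => rw [eq_pureG hg]
  rw [act_mul, inv_mul_cancel, act_one, ← eq_pureG hg]

lemma act_ne_one (α : (ZMod 9)ˣ) {g : Gn n} (hg : pi0 (Gn.qn g) = 0) (h1 : g ≠ 1) :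
    act r α g ≠ 1 := by
  intro h
  apply h1
  have := act_cancel r α hg
  rw [h, act_one_elem] at this
  exact this.symm

abbrev Tsub (n : ℕ) := {g : Gn n // g ≠ 1 ∧ pi0 (Gn.qn g) = 0}

/-- the action on the set `T_n`. -/
def actT (α : (ZMod 9)ˣ) (t : Tsub n) : Tsub n :=
  ⟨act r α t.1, act_ne_one r α t.2.2 t.2.1, pi0_qn_act r α t.2.2⟩

lemma actT_one (t : Tsub n) : actT r 1 t = t := Subtype.ext (act_one r t.1)

lemma actT_mul (α β : (ZMod 9)ˣ) (t : Tsub n) :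
    actT r α (actT r β t) = actT r (α * β) t := by
  apply Subtype.ext
  show act r α (act r β t.1) = act r (α * β) t.1
  rw [eq_pureG t.2.2, act_mul]

/-- The `MulAction` structure. -/
def mact : MulAction (ZMod 9)ˣ (Tsub n) where
  smul := actT r
  one_smul := actT_one r
  mul_smul α β t := (actT_mul r α β t).symm

/-- The orbit set appearing in the theorem. -/
def Oset (g : Gn n) : Set (Gn n) :=
  {h | ∃ (x : Gn n) (α : (ZMod 9)ˣ),
    pi0 (Gn.qn x) = Multiplicative.toAdd (r α) ∧ x * g ^ ((α : ZMod 9).val) * x⁻¹ = h}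

lemma Oset_eq {g : Gn n} (hg : pi0 (Gn.qn g) = 0) :
    Oset r g = {h | ∃ α, act r α g = h} := by
  ext h
  constructor
  · rintro ⟨x, α, hx, rfl⟩
    refine ⟨α, ?_⟩
    rw [act]
    conv_lhs => rw [eq_pureG hg]
    conv_rhs => rw [eq_pureG hg]
    rw [pureG_pow, conj_pureG, conj_pureG, hx, pi0_qn_xa]
  · rintro ⟨α, rfl⟩
    exact ⟨xa r α, α, pi0_qn_xa r α, rfl⟩

lemma Oset_act (α : (ZMod 9)ˣ) {g : Gn n} (hg : pi0 (Gn.qn g) = 0) :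
    Oset r (act r α g) = Oset r g := by
  rw [Oset_eq r hg, Oset_eq r (pi0_qn_act r α hg)]
  ext h
  constructor
  · rintro ⟨β, rfl⟩
    refine ⟨β * α, ?_⟩
    rw [eq_pureG hg, ← act_mul]
  · rintro ⟨γ, rfl⟩
    refine ⟨γ * α⁻¹, ?_⟩
    have h2 : act r (γ * α⁻¹) (act r α g) = act r (γ * α⁻¹ * α) g := by
      rw [eq_pureG hg, act_mul]
    rw [h2, inv_mul_cancel_right]

lemma Oset_key (s t : Tsub n) :
    Oset r s.1 = Oset r t.1 ↔ ∃ α, actT r α s = t := by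
  constructor
  · intro h
    have ht : t.1 ∈ Oset r t.1 := by
      rw [Oset_eq r t.2.2]
      exact ⟨1, act_one r t.1⟩
    rw [← h, Oset_eq r s.2.2] at ht
    obtain ⟨α, hα⟩ := ht
    exact ⟨α, Subtype.ext hα⟩
  · rintro ⟨α, rfl⟩
    exact (Oset_act r α s.2.2).symm

lemma card_ne {X : Type*} [Fintype X] [DecidableEq X] (x0 : X) :
    Fintype.card {p : X // p ≠ x0} = Fintype.card X - 1 := by
  have h := Fintype.card_subtype_compl (fun p : X => p = x0)
  simpa [Fintype.card_subtype_eq] using h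

/-- `T_n` is the nonzero part of `(ℤ/3)^n × (ℤ/9)^n`. -/
def TsubEquiv : Tsub n ≃ {p : (Fin n → ZMod 3) × (Fin n → ZMod 9) // p ≠ 0} where
  toFun t := ⟨(t.1.1, t.1.2.2), fun h => t.2.1 (by
    have hc : t.1.1 = 0 := congrArg Prod.fst h
    have hv : t.1.2.2 = 0 := congrArg Prod.snd h
    rw [eq_pureG t.2.2, hc, hv]
    exact pureG_eq_one.mpr ⟨rfl, rfl⟩)⟩
  invFun p := ⟨pureG p.1.1 p.1.2, fun h => by
      obtain ⟨hc, hv⟩ := pureG_eq_one.mp h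
      exact p.2 (Prod.ext hc hv), rfl⟩
  left_inv t := Subtype.ext (eq_pureG t.2.2).symm
  right_inv p := Subtype.ext rfl

lemma card_Tsub : Fintype.card (Tsub n) = 27 ^ n - 1 := by
  rw [Fintype.card_congr (TsubEquiv (n := n)), card_ne, Fintype.card_prod,
    Fintype.card_fun, Fintype.card_fun, Fintype.card_fin, ZMod.card, ZMod.card, ← mul_pow]
  norm_num

lemma fix_iff (α : (ZMod 9)ˣ) (t : Tsub n) :
    actT r α t = t ↔
      ((α : ZMod 9).val • t.1.1
          + fun i => Multiplicative.toAdd (r α) * red (((α : ZMod 9).val • t.1.2.2) i)) = t.1.1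
        ∧ (α : ZMod 9).val • t.1.2.2 = t.1.2.2 := by
  rw [Subtype.ext_iff]
  show act r α t.1 = t.1 ↔ _
  rw [eq_pureG t.2.2, act_pureG, pureG_inj]
  rfl

lemma card_fix_one : Fintype.card {t : Tsub n // actT r 1 t = t} = 27 ^ n - 1 := by
  rw [Fintype.card_congr (Equiv.subtypeUnivEquiv (actT_one r))]
  exact card_Tsub

lemma card_fix_zero (α : (ZMod 9)ˣ)
    (h9 : ∀ x : ZMod 9, (α : ZMod 9).val • x = x → x = 0)
    (h3 : ∀ x : ZMod 3, (α : ZMod 9).val • x = x → x = 0) :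
    Fintype.card {t : Tsub n // actT r α t = t} = 0 := by
  rw [Fintype.card_eq_zero_iff]
  constructor
  rintro ⟨t, ht⟩
  rw [fix_iff] at ht
  obtain ⟨hc, hv⟩ := ht
  have hv0 : t.1.2.2 = 0 := funext fun i => h9 _ (congrFun hv i)
  have hterm : (fun i => Multiplicative.toAdd (r α) * red (((α : ZMod 9).val • t.1.2.2) i))
      = 0 := by
    funext i
    rw [hv, hv0]
    simp
  rw [hterm, add_zero] at hc
  have hc0 : t.1.1 = 0 := funext fun i => h3 _ (congrFun hc i)
  exact t.2.1 (by rw [eq_pureG t.2.2, hc0, hv0]; exact pureG_eq_one.mpr ⟨rfl, rfl⟩)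

/-- the kernel of `red`, as a subtype. -/
def Kred := {x : ZMod 9 // red x = 0}
instance : Fintype Kred := Subtype.fintype _
instance : DecidableEq Kred := Subtype.instDecidableEq

lemma card_Kred : Fintype.card Kred = 3 := by
  rfl

/-- basepoint -/
def k0 (n : ℕ) : (Fin n → ZMod 3) × (Fin n → Kred) := (0, fun _ => ⟨0, map_zero red⟩)

lemma card_fix_three (α : (ZMod 9)ˣ)
    (h9 : ∀ x : ZMod 9, ((α : ZMod 9).val • x = x ↔ red x = 0))
    (h3 : ∀ x : ZMod 3, (α : ZMod 9).val • x = x) :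
    Fintype.card {t : Tsub n // actT r α t = t} = 3 ^ n * 3 ^ n - 1 := by
  have e : {t : Tsub n // actT r α t = t} ≃ {q : (Fin n → ZMod 3) × (Fin n → Kred) // q ≠ k0 n} :=
    { toFun := fun tt =>
        ⟨(tt.1.1.1, fun i => ⟨tt.1.1.2.2 i, (h9 _).mp (congrFun ((fix_iff r α tt.1).mp tt.2).2 i)⟩),
          by
            intro h
            have hc : tt.1.1.1 = 0 := congrArg Prod.fst h
            have hk := congrArg Prod.snd h
            have hv : tt.1.1.2.2 = 0 := by
              funext i
              have := congrFun hk i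
              exact congrArg Subtype.val this
            exact tt.1.2.1 (by
              rw [eq_pureG tt.1.2.2, hc, hv]
              exact pureG_eq_one.mpr ⟨rfl, rfl⟩)⟩
      invFun := fun q =>
        ⟨⟨pureG q.1.1 (fun i => (q.1.2 i).1), by
            intro h
            obtain ⟨hc, hv⟩ := pureG_eq_one.mp h
            refine q.2 (Prod.ext hc ?_)
            funext i
            exact Subtype.ext (congrFun hv i), rfl⟩, by
          refine (fix_iff r α _).mpr ⟨?_, ?_⟩
          · have h2 : (α : ZMod 9).val • (fun i => (q.1.2 i).1) = fun i => (q.1.2 i).1 :=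
              funext fun i => (h9 _).mpr (q.1.2 i).2
            show (α : ZMod 9).val • q.1.1
                + (fun i => Multiplicative.toAdd (r α)
                    * red (((α : ZMod 9).val • fun i => (q.1.2 i).1) i)) = q.1.1
            rw [h2]
            funext i
            show (α : ZMod 9).val • q.1.1 i + Multiplicative.toAdd (r α) * red ((q.1.2 i).1)
                = q.1.1 i
            rw [(q.1.2 i).2, mul_zero, add_zero, h3]
          · exact funext fun i => (h9 _).mpr (q.1.2 i).2⟩
      left_inv := fun tt => Subtype.ext (Subtype.ext (eq_pureG tt.1.2.2).symm)
      right_inv := fun q => Subtype.ext (Prod.ext rfl (funext fun i => Subtype.ext rfl)) }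
  rw [Fintype.card_congr e, card_ne, Fintype.card_prod, Fintype.card_fun, Fintype.card_fun,
    Fintype.card_fin, ZMod.card, card_Kred]

end Aux

/-- Let `r : (ℤ/9)ˣ → ℤ/3` be any surjective group homomorphism (to
the additive group `ℤ/3`), and let `F = {(h, α) : π₀(q_n(h)) = r(α)} ≤ G_n × (ℤ/9)ˣ`,
acting on `T_n = {g ≠ 1 : π₀(q_n(g)) = 0}` by `(h, α)·g = h g^(α.val) h⁻¹`.  Then the
number of orbits of `F` on `T_n` — encoded as the number of distinct orbit sets —
equals `(9^n − 1)/3 + (27^n − 1)/6`. -/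
theorem stmt_14 (n : ℕ) (hn : 1 ≤ n)
    (r : (ZMod 9)ˣ →* Multiplicative (ZMod 3)) (hr : Function.Surjective r) :
    (Nat.card {O : Set (Gn n) // ∃ g : Gn n, g ≠ 1 ∧ pi0 (Gn.qn g) = 0 ∧
        O = {h : Gn n | ∃ (x : Gn n) (α : (ZMod 9)ˣ),
              pi0 (Gn.qn x) = Multiplicative.toAdd (r α) ∧
              x * g ^ ((α : ZMod 9).val) * x⁻¹ = h}} : ℚ)
      = ((9 : ℚ) ^ n - 1) / 3 + ((27 : ℚ) ^ n - 1) / 6 := by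
  classical
  letI : MulAction (ZMod 9)ˣ (Tsub n) := mact r
  set Q := Quotient (MulAction.orbitRel (ZMod 9)ˣ (Tsub n)) with hQdef
  letI : Fintype Q := Fintype.ofFinite _
  -- the lifted orbit-set map
  have hlift : ∀ a b : Tsub n, (MulAction.orbitRel (ZMod 9)ˣ (Tsub n)).r a b →
      Oset r a.1 = Oset r b.1 := by
    intro a b hab
    obtain ⟨α, hα⟩ := hab
    exact ((Oset_key r b a).mpr ⟨α, hα⟩).symm
  set fbar : Q → Set (Gn n) := Quotient.lift (fun t : Tsub n => Oset r t.1) hlift with hfbar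
  have hinj : Function.Injective fbar := by
    intro qa qb
    refine Quotient.inductionOn₂ qa qb ?_
    intro a b h
    refine Quotient.sound ?_
    have := (Oset_key r a b).mp h
    obtain ⟨α, hα⟩ := this
    exact ⟨α⁻¹, by rw [← hα]; show actT r α⁻¹ (actT r α a) = a; rw [actT_mul, inv_mul_cancel, actT_one]⟩
  -- identify the card
  have hcard1 : Nat.card {O : Set (Gn n) // ∃ g : Gn n, g ≠ 1 ∧ pi0 (Gn.qn g) = 0 ∧
      O = {h : Gn n | ∃ (x : Gn n) (α : (ZMod 9)ˣ),
            pi0 (Gn.qn x) = Multiplicative.toAdd (r α) ∧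
            x * g ^ ((α : ZMod 9).val) * x⁻¹ = h}} = Fintype.card Q := by
    have e : {O : Set (Gn n) // ∃ g : Gn n, g ≠ 1 ∧ pi0 (Gn.qn g) = 0 ∧
        O = {h : Gn n | ∃ (x : Gn n) (α : (ZMod 9)ˣ),
              pi0 (Gn.qn x) = Multiplicative.toAdd (r α) ∧
              x * g ^ ((α : ZMod 9).val) * x⁻¹ = h}} ≃ Set.range fbar := by
      refine Equiv.subtypeEquivRight ?_
      intro O
      constructor
      · rintro ⟨g, h1, h2, rfl⟩
        exact ⟨Quotient.mk _ ⟨g, h1, h2⟩, rfl⟩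
      · rintro ⟨q, hq⟩
        revert hq
        refine Quotient.inductionOn q ?_
        intro t hq
        exact ⟨t.1, t.2.1, t.2.2, hq.symm⟩
    rw [Nat.card_congr e, Nat.card_range_of_injective hinj, Nat.card_eq_fintype_card]
  rw [hcard1]
  -- Burnside
  have hburn := MulAction.sum_card_fixedBy_eq_card_orbits_mul_card_group (ZMod 9)ˣ (Tsub n)
  have hc6 : Fintype.card (ZMod 9)ˣ = 6 := by
    rw [ZMod.card_units_eq_totient]
    decide
  -- explicit units
  let u2 : (ZMod 9)ˣ := ⟨2, 5, by decide, by decide⟩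
  let u4 : (ZMod 9)ˣ := ⟨4, 7, by decide, by decide⟩
  let u5 : (ZMod 9)ˣ := ⟨5, 2, by decide, by decide⟩
  let u7 : (ZMod 9)ˣ := ⟨7, 4, by decide, by decide⟩
  let u8 : (ZMod 9)ˣ := ⟨8, 8, by decide, by decide⟩
  have huniv : (Finset.univ : Finset (ZMod 9)ˣ) = {1, u2, u4, u5, u7, u8} := by decide
  have hfixcongr : ∀ u : (ZMod 9)ˣ,
      Fintype.card (MulAction.fixedBy (Tsub n) u) = Fintype.card {t : Tsub n // actT r u t = t} :=
    fun u => Fintype.card_congr (Equiv.subtypeEquivRight fun t => Iff.rfl)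
  have hsum : (∑ a : (ZMod 9)ˣ, Fintype.card (MulAction.fixedBy (Tsub n) a))
      = (27 ^ n - 1) + ((3 ^ n * 3 ^ n - 1) + ((3 ^ n * 3 ^ n - 1) + 0)) + 0 + 0 := by
    rw [huniv]
    rw [Finset.sum_insert (by decide), Finset.sum_insert (by decide),
      Finset.sum_insert (by decide), Finset.sum_insert (by decide),
      Finset.sum_insert (by decide), Finset.sum_singleton]
    rw [hfixcongr, hfixcongr, hfixcongr, hfixcongr, hfixcongr, hfixcongr]
    rw [card_fix_one r]
    rw [card_fix_zero r u2 (by decide) (by decide)]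
    rw [card_fix_zero r u5 (by decide) (by decide)]
    rw [card_fix_zero r u8 (by decide) (by decide)]
    rw [card_fix_three r u4 (by decide) (by decide)]
    rw [card_fix_three r u7 (by decide) (by decide)]
    ring
  rw [hc6, hsum] at hburn
  -- final arithmetic
  have h27 : 1 ≤ 27 ^ n := Nat.one_le_pow n 27 (by norm_num)
  have h9 : 1 ≤ 3 ^ n * 3 ^ n := Nat.one_le_iff_ne_zero.mpr (by positivity)
  have hQ6 : ((Fintype.card Q : ℚ)) * 6
      = ((27 : ℚ) ^ n - 1) + 2 * ((3 : ℚ) ^ n * 3 ^ n - 1) := by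
    have := congrArg (fun m : ℕ => (m : ℚ)) hburn
    push_cast [h27, h9] at this
    linarith
  have h3327 : (3 : ℚ) ^ n * 3 ^ n = 9 ^ n := by
    rw [← mul_pow]; norm_num
  rw [h3327] at hQ6
  linarith
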